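/- arXiv:2410.17533 — 2 statements merged into one kernel-verified Lean document; each statement's English description precedes it below -/
import Mathlib

section
/- Let Y be a finite, linearly ordered set of labels, let S ≥ 1, and let p : Fin S → Y assign to each of S submodels its predicted label. For each label y define the vote count N(p, y) = |{i : p i = y}|, and let g(p) denote the majority-vote ensemble prediction: the unique label A such that for every label y ≠ A, either N(p, y) < N(p, A), or N(p, y) = N(p, A) and A < y (ties are broken in favor of the smaller label). Let A = g(p), let N_A = N(p, A), and let N_B = max over labels y ≠ A of N(p, y). Then for every r and every p' : Fin S → Y such that |{i : p i ≠ p' i}| ≤ r, if 2·r ≤ N_A − N_B + 𝟙[A < B] − 1 (where B is the label attaining the second-largest count, i.e., B = g restricted to labels ≠ A, and 𝟙[A < B] equals 1 if A < B and 0 otherwise), then g(p') = A. -/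
/-- The number of submodels (out of `S`) whose prediction `p i` equals label `y`. -/
def voteCount {Y : Type*} [DecidableEq Y] {S : ℕ} (p : Fin S → Y) (y : Y) : ℕ :=
  (Finset.univ.filter (fun i => p i = y)).card

private lemma voteCount_le_aux {Y : Type*} [DecidableEq Y] {S : ℕ} (q q' : Fin S → Y) (z : Y) :
    voteCount q z ≤ voteCount q' z + (Finset.univ.filter (fun i => q i ≠ q' i)).card := by
  have hsub : (Finset.univ.filter (fun i => q i = z)) ⊆
      (Finset.univ.filter (fun i => q' i = z)) ∪ (Finset.univ.filter (fun i => q i ≠ q' i)) := by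
    intro i hi
    simp only [Finset.mem_filter, Finset.mem_union, Finset.mem_univ, true_and] at hi ⊢
    by_cases h : q' i = z
    · exact Or.inl h
    · exact Or.inr (fun he => h (he ▸ hi))
  calc voteCount q z ≤ ((Finset.univ.filter (fun i => q' i = z)) ∪
        (Finset.univ.filter (fun i => q i ≠ q' i))).card := Finset.card_le_card hsub
    _ ≤ _ := Finset.card_union_le _ _

/-- **Certified number of perturbed layers (Theorem 1).**
`A` is the majority-vote ensemble prediction `g(p)` (ties broken in favor of the
smaller label), `B` is the runner-up label (the majority among labels `≠ A`),
`N_A = voteCount p A` and `N_B = voteCount p B` are the largest and second-largest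
vote counts.  If at most `r` submodel predictions change and
`2·r ≤ N_A − N_B + 𝟙[A < B] − 1`, then `A` is still the majority-vote ensemble
prediction of the perturbed predictions `p'`, i.e. `g(p') = g(p) = A`. -/
theorem certified_number_of_perturbed_layers
    {Y : Type*} [Fintype Y] [LinearOrder Y] {S : ℕ} (hS : 1 ≤ S)
    (p : Fin S → Y) (A B : Y)
    (hA : ∀ y, y ≠ A →
      voteCount p y < voteCount p A ∨ (voteCount p y = voteCount p A ∧ A < y))
    (hBA : B ≠ A)
    (hB : ∀ y, y ≠ A → y ≠ B →
      voteCount p y < voteCount p B ∨ (voteCount p y = voteCount p B ∧ B < y))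
    (r : ℕ) (p' : Fin S → Y)
    (hpert : (Finset.univ.filter (fun i => p i ≠ p' i)).card ≤ r)
    (hr : 2 * (r : ℤ) ≤
      (voteCount p A : ℤ) - (voteCount p B : ℤ) + (if A < B then 1 else 0) - 1) :
    ∀ y, y ≠ A →
      voteCount p' y < voteCount p' A ∨ (voteCount p' y = voteCount p' A ∧ A < y) := by
  intro y hy
  -- symmetric perturbation set
  have hsymm : (Finset.univ.filter (fun i => p' i ≠ p i)).card
      = (Finset.univ.filter (fun i => p i ≠ p' i)).card := by
    congr 1
    apply Finset.filter_congr
    intro i _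
    simp [ne_comm]
  have h1 : voteCount p A ≤ voteCount p' A + r := by
    have := voteCount_le_aux p p' A
    omega
  have h2 : voteCount p' y ≤ voteCount p y + r := by
    have := voteCount_le_aux p' p y
    omega
  -- bound voteCount p y by voteCount p B
  have hyB : (voteCount p y : ℤ) ≤ voteCount p B := by
    by_cases hyB' : y = B
    · subst hyB'; rfl
    · rcases hB y hy hyB' with h | ⟨h, _⟩ <;> omega
  by_cases hAB : A < B
  · rw [if_pos hAB] at hr
    -- 2r ≤ N_A - N_B
    rcases lt_or_eq_of_le (show voteCount p' y ≤ voteCount p' A by omega) with h | h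
    · exact Or.inl h
    · refine Or.inr ⟨h, ?_⟩
      -- tight case: voteCount p y ≥ voteCount p B, so y = B or B < y
      have hge : (voteCount p B : ℤ) ≤ voteCount p y := by omega
      by_cases hyB' : y = B
      · exact hyB' ▸ hAB
      · rcases hB y hy hyB' with h' | ⟨_, h'⟩
        · omega
        · exact hAB.trans h'
  · rw [if_neg hAB] at hr
    exact Or.inl (by omega)
end

section
/- Let Y be a finite, linearly ordered set of labels with at least two elements, let S ≥ 1, and let p : Fin S → Y assign to each of S submodels its predicted label. For each label y define the vote count N(p, y) = |{i : p i = y}|, and let g(p) denote the majority-vote ensemble prediction with ties broken in favor of the smaller label. Let A = g(p), N_A = N(p, A), let B be the runner-up label (B = g among labels ≠ A) with N_B = N(p, B), and let r* = ⌊(N_A − N_B + 𝟙[A < B] − 1)/2⌋. Then there exists p' : Fin S → Y with |{i : p i ≠ p' i}| = r* + 1 such that g(p') ≠ A. In particular, r* is the maximum number of changed submodel predictions tolerated by the majority-vote ensemble. -/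
private lemma two_floor_bounds (n : ℤ) :
    2 * ⌊(n : ℚ) / 2⌋ ≤ n ∧ n ≤ 2 * ⌊(n : ℚ) / 2⌋ + 1 := by
  have h1 := Int.floor_le ((n : ℚ) / 2)
  have h2 := Int.lt_floor_add_one ((n : ℚ) / 2)
  constructor
  · exact_mod_cast (by push_cast; linarith : ((2 * ⌊(n : ℚ) / 2⌋ : ℤ) : ℚ) ≤ (n : ℚ))
  · have : (n : ℚ) < ((2 * ⌊(n : ℚ) / 2⌋ + 2 : ℤ) : ℚ) := by push_cast; linarith
    have := (by exact_mod_cast this : n < 2 * ⌊(n : ℚ) / 2⌋ + 2)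
    omega

/-- **Tightness of `r*` (Theorem 2).**
`A` is the majority-vote ensemble prediction `g(p)` (ties broken in favor of the
smaller label), `B` is the runner-up label (the majority among labels `≠ A`),
`N_A = voteCount p A`, `N_B = voteCount p B`, and
`r* = ⌊(N_A − N_B + 𝟙[A < B] − 1) / 2⌋`.  Then there is a perturbed prediction
vector `p'` differing from `p` in exactly `r* + 1` submodels such that `A` is no
longer the majority-vote ensemble prediction, i.e. `g(p') ≠ A`. -/
theorem tightness_of_certified_radius
    {Y : Type*} [Fintype Y] [LinearOrder Y] [Nontrivial Y] {S : ℕ} (hS : 1 ≤ S)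
    (p : Fin S → Y) (A B : Y)
    (hA : ∀ y, y ≠ A →
      voteCount p y < voteCount p A ∨ (voteCount p y = voteCount p A ∧ A < y))
    (hBA : B ≠ A)
    (hB : ∀ y, y ≠ A → y ≠ B →
      voteCount p y < voteCount p B ∨ (voteCount p y = voteCount p B ∧ B < y))
    (rstar : ℤ)
    (hrstar : rstar =
      ⌊((voteCount p A : ℚ) - (voteCount p B : ℚ) + (if A < B then 1 else 0) - 1) / 2⌋) :
    ∃ p' : Fin S → Y,
      ((Finset.univ.filter (fun i => p i ≠ p' i)).card : ℤ) = rstar + 1 ∧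
      ¬ (∀ y, y ≠ A →
        voteCount p' y < voteCount p' A ∨ (voteCount p' y = voteCount p' A ∧ A < y)) := by
  classical
  set NA := voteCount p A with hNA
  set NB := voteCount p B with hNB
  -- rewrite the floor argument as a cast of an integer
  set ind : ℤ := if A < B then 1 else 0 with hind
  have hargs : ((NA : ℚ) - (NB : ℚ) + (if A < B then 1 else 0) - 1)
      = (((NA : ℤ) - NB + ind - 1 : ℤ) : ℚ) := by
    by_cases h : A < B <;> simp [hind, h] <;> push_cast <;> ring
  rw [hargs] at hrstar
  obtain ⟨hfl, hfu⟩ := two_floor_bounds ((NA : ℤ) - NB + ind - 1)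
  rw [← hrstar] at hfl hfu
  -- NB ≤ NA, and strict when ¬ A < B
  have hABle : NB ≤ NA := by
    rcases hA B hBA with h | ⟨h, _⟩ <;> omega
  have hABlt : ¬ A < B → NB < NA := by
    intro h
    rcases hA B hBA with h' | ⟨h', h''⟩
    · exact h'
    · exact absurd h'' h
  -- NA ≥ 1
  have hNApos : 1 ≤ NA := by
    by_contra h
    push_neg at h
    interval_cases NA
    have : ∀ y : Y, voteCount p y = 0 := by
      intro y
      by_cases hy : y = A
      · rw [hy]; omega
      · rcases hA y hy with h | ⟨h, _⟩ <;> omega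
    -- sum of voteCounts = S ≥ 1, contradiction: p 0's label has positive count
    have i0 : Fin S := ⟨0, hS⟩
    have h1 : voteCount p (p i0) = 0 := this (p i0)
    have h2 : 0 < (Finset.univ.filter (fun i => p i = p i0)).card :=
      Finset.card_pos.mpr ⟨i0, by simp⟩
    rw [voteCount] at h1
    omega
  have hind01 : ind = 0 ∨ ind = 1 := by by_cases h : A < B <;> simp [hind, h]
  have hindlt : ind = 0 → NB < NA := by
    intro h
    apply hABlt
    intro hlt
    simp [hind, hlt] at h
  -- rstar ≥ 0 and k bounds
  set k : ℕ := rstar.toNat + 1 with hk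
  have hrnn : 0 ≤ rstar := by omega
  have hkZ : (k : ℤ) = rstar + 1 := by omega
  have hkNA : k ≤ NA := by omega
  have h2k : (NA : ℤ) - NB + ind ≤ 2 * k := by omega
  -- choose k indices voting for A and flip them to B
  set T : Finset (Fin S) := Finset.univ.filter (fun i => p i = A) with hT
  have hTcard : T.card = NA := rfl
  obtain ⟨T', hT'sub, hT'card⟩ := Finset.exists_subset_card_eq (hTcard ▸ hkNA : k ≤ T.card)
  set p' : Fin S → Y := fun i => if i ∈ T' then B else p i with hp'
  have hmemT' : ∀ i ∈ T', p i = A := by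
    intro i hi
    have := hT'sub hi
    simpa [hT] using this
  refine ⟨p', ?_, ?_⟩
  · -- the changed set is exactly T'
    have : Finset.univ.filter (fun i => p i ≠ p' i) = T' := by
      ext i
      simp only [Finset.mem_filter, Finset.mem_univ, true_and]
      constructor
      · intro h
        by_contra hi
        exact h (by simp [hp', hi])
      · intro hi
        have hpA := hmemT' i hi
        simp [hp', hi, hpA]
        exact fun h => hBA h.symm
    rw [this, hT'card, hkZ]
  · -- new vote counts
    have hcA : voteCount p' A = NA - k := by
      have : Finset.univ.filter (fun i => p' i = A) = T \ T' := by
        ext i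
        simp only [Finset.mem_filter, Finset.mem_univ, true_and, Finset.mem_sdiff, hT]
        by_cases hi : i ∈ T' <;> simp [hp', hi, hBA]
      rw [voteCount, this, Finset.card_sdiff_of_subset hT'sub, hTcard, hT'card]
    have hcB : voteCount p' B = NB + k := by
      have hdisj : Disjoint (Finset.univ.filter (fun i => p i = B)) T' := by
        rw [Finset.disjoint_left]
        intro i hi hi'
        have h1 : p i = B := by simpa using hi
        have h2 := hmemT' i hi'
        exact hBA (h1 ▸ h2)
      have : Finset.univ.filter (fun i => p' i = B)
          = Finset.univ.filter (fun i => p i = B) ∪ T' := by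
        ext i
        simp only [Finset.mem_filter, Finset.mem_univ, true_and, Finset.mem_union]
        by_cases hi : i ∈ T' <;> simp [hp', hi]
      rw [voteCount, this, Finset.card_union_of_disjoint hdisj, hT'card]
      rfl
    push_neg
    refine ⟨B, hBA, ?_, ?_⟩
    · rw [hcA, hcB]
      rcases hind01 with h | h
      · have := hindlt h; omega
      · omega
    · intro heq
      rw [hcA, hcB] at heq
      by_contra h
      push_neg at h
      have : ind = 1 := by simp [hind, h]
      omega
end
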